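/- arXiv:2204.11916 — 2 statements merged into one kernel-verified Lean document; each statement's English description precedes it below -/
import Mathlib

section
/- A smooth rotationally invariant function f on a disk D ⊂ ℝ² of radius r₀ ∈ (0, ∞] can be written as f(x,y) = g(x² + y²) for a smooth function g on [0, r₀²). -/
open Set Filter Topology
open scoped NNReal ENNReal

lemma par_smooth : ∀ n : ℕ, ∀ F : ℝ → ℝ → ℝ, ContDiff ℝ (⊤ : ℕ∞) (Function.uncurry F) →
    ContDiff ℝ n (fun x => ∫ t in (0:ℝ)..1, F x t) := by
  intro n
  induction n with
  | zero =>
    intro F hF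
    exact contDiff_zero.mpr
      (intervalIntegral.continuous_parametric_intervalIntegral_of_continuous' hF.continuous 0 1)
  | succ n ih =>
    intro F hF
    set F' : ℝ → ℝ → ℝ := fun x t => fderiv ℝ (Function.uncurry F) (x, t) (1, 0) with hF'
    have hF'c : ContDiff ℝ (⊤ : ℕ∞) (Function.uncurry F') := by
      have := (hF.fderiv_right (m := ((⊤ : ℕ∞) : WithTop ℕ∞)) (le_of_eq rfl)).clm_apply
        (contDiff_const (c := ((1:ℝ), (0:ℝ))))
      exact this
    have hder : ∀ x₀, HasDerivAt (fun x => ∫ t in (0:ℝ)..1, F x t)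
        (∫ t in (0:ℝ)..1, F' x₀ t) x₀ := by
      intro x₀
      obtain ⟨C, hC⟩ := ((isCompact_closedBall x₀ 1).prod (isCompact_Icc (a := (0:ℝ)) (b := 1))
        ).exists_bound_of_continuousOn hF'c.continuous.continuousOn
      have hdiff : ∀ t y, HasDerivAt (fun x => F x t) (F' y t) y := by
        intro t y
        have h1 : HasDerivAt (fun x : ℝ => (x, t)) ((1:ℝ), (0:ℝ)) y :=
          (hasDerivAt_id y).prodMk (hasDerivAt_const y t)
        have h2 := ((hF.differentiable (by simp)) (y, t)).hasFDerivAt.comp_hasDerivAt y h1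
        exact h2
      refine (intervalIntegral.hasDerivAt_integral_of_dominated_loc_of_deriv_le
        (bound := fun _ => C) (Metric.ball_mem_nhds x₀ one_pos) ?_ ?_ ?_ ?_ ?_ ?_).2
      · exact Eventually.of_forall (fun x => (show Continuous (fun t => F x t) from
          hF.continuous.comp (continuous_const.prodMk continuous_id)).aestronglyMeasurable)
      · exact (show Continuous (fun t => F x₀ t) from
          hF.continuous.comp (continuous_const.prodMk continuous_id)).intervalIntegrable 0 1
      · exact (show Continuous (fun t => F' x₀ t) from
          hF'c.continuous.comp (continuous_const.prodMk continuous_id)).aestronglyMeasurable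
      · refine Eventually.of_forall (fun t ht x hx => hC (x, t) ⟨Metric.ball_subset_closedBall hx, ?_⟩)
        rw [Set.uIoc_of_le zero_le_one] at ht
        exact ⟨ht.1.le, ht.2⟩
      · exact intervalIntegrable_const
      · exact Eventually.of_forall (fun t _ x _ => hdiff t x)
    rw [Nat.cast_succ, contDiff_succ_iff_deriv]
    refine ⟨fun x => (hder x).differentiableAt, by simp, ?_⟩
    have : deriv (fun x => ∫ t in (0:ℝ)..1, F x t) = fun x => ∫ t in (0:ℝ)..1, F' x t :=
      funext fun x => (hder x).deriv
    rw [this]; exact ih F' hF'c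

noncomputable def wh1 (H : ℝ → ℝ) (x : ℝ) : ℝ :=
  (1/2) * ∫ t in (0:ℝ)..1, deriv (deriv H) (t * x)

lemma wh1_props (H : ℝ → ℝ) (hH : ContDiff ℝ (⊤ : ℕ∞) H) (he : ∀ x, H (-x) = H x) :
    ContDiff ℝ (⊤ : ℕ∞) (wh1 H) ∧ (∀ x, wh1 H (-x) = wh1 H x) ∧
      (∀ x, x ≠ 0 → deriv H x = 2 * x * wh1 H x) := by
  have hd1 : ContDiff ℝ (⊤ : ℕ∞) (deriv H) := hH.iterate_deriv 1
  have hd2 : ContDiff ℝ (⊤ : ℕ∞) (deriv (deriv H)) := hH.iterate_deriv 2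
  have hodd : ∀ x, deriv H (-x) = - deriv H x := by
    intro x
    have h2 := deriv_comp_neg (f := H) (x := -x)
    rw [funext he, neg_neg] at h2
    exact h2
  have heven2 : ∀ x, deriv (deriv H) (-x) = deriv (deriv H) x := by
    intro x
    have h1 : (fun y => deriv H (-y)) = fun y => -deriv H y := funext hodd
    have h2 := deriv_comp_neg (f := deriv H) (x := -x)
    rw [h1, show (fun y => -deriv H y) = -(deriv H) from rfl, deriv.neg, neg_neg] at h2
    linarith
  refine ⟨?_, ?_, ?_⟩
  · have hF : ContDiff ℝ (⊤ : ℕ∞) (Function.uncurry fun x t => deriv (deriv H) (t * x)) :=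
      hd2.comp (contDiff_snd.mul contDiff_fst)
    exact contDiff_const.mul (contDiff_infty.mpr fun n => par_smooth n _ hF)
  · intro x
    unfold wh1
    congr 1
    apply intervalIntegral.integral_congr
    intro t _
    simp only
    rw [show t * -x = -(t * x) by ring, heven2]
  · intro x hx
    unfold wh1
    rw [intervalIntegral.integral_comp_mul_right (f := deriv (deriv H)) hx]
    rw [intervalIntegral.integral_deriv_eq_sub (fun y _ => hd1.differentiable (by simp) y)
      (hd2.continuous.intervalIntegrable _ _)]
    have h0 : deriv H 0 = 0 := by have := hodd 0; rw [neg_zero] at this; linarith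
    simp only [zero_mul, one_mul, h0, sub_zero, smul_eq_mul]
    field_simp

lemma glob_whitney : ∀ n : ℕ, ∀ H : ℝ → ℝ, ContDiff ℝ (⊤ : ℕ∞) H → (∀ x, H (-x) = H x) →
    ContDiffOn ℝ n (fun s => H (Real.sqrt s)) (Ici 0) := by
  intro n
  induction n with
  | zero =>
    intro H hH _
    exact contDiffOn_zero.mpr (hH.continuous.comp Real.continuous_sqrt).continuousOn
  | succ n ih =>
    intro H hH he
    obtain ⟨hk, hke, hkd⟩ := wh1_props H hH he
    have hd1 : Differentiable ℝ H := hH.differentiable (by simp)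
    have hpos : ∀ s : ℝ, 0 < s → HasDerivAt (fun s => H (Real.sqrt s)) (wh1 H (Real.sqrt s)) s := by
      intro s hs
      have hsq : Real.sqrt s ≠ 0 := (Real.sqrt_pos.mpr hs).ne'
      have := (hd1 (Real.sqrt s)).hasDerivAt.comp s (Real.hasDerivAt_sqrt hs.ne')
      have e : deriv H (Real.sqrt s) * (1 / (2 * Real.sqrt s)) = wh1 H (Real.sqrt s) := by
        rw [hkd _ hsq]; field_simp
      rw [← e]; exact this
    have hder : ∀ s ∈ Ici (0:ℝ), HasDerivWithinAt (fun s => H (Real.sqrt s))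
        (wh1 H (Real.sqrt s)) (Ici 0) s := by
      intro s hs
      rcases eq_or_lt_of_le (show (0:ℝ) ≤ s from hs) with h0 | hs0
      · subst h0
        apply hasDerivWithinAt_Ici_of_tendsto_deriv (s := Ioi 0)
        · exact fun s hs => (hpos s hs).differentiableAt.differentiableWithinAt
        · exact (hH.continuous.comp Real.continuous_sqrt).continuousWithinAt
        · exact self_mem_nhdsWithin
        · have hc : Tendsto (fun s => wh1 H (Real.sqrt s)) (𝓝[>] (0:ℝ))
              (𝓝 (wh1 H (Real.sqrt 0))) :=
            ((hk.continuous.comp Real.continuous_sqrt).tendsto 0).mono_left nhdsWithin_le_nhds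
          refine Tendsto.congr' ?_ hc
          filter_upwards [self_mem_nhdsWithin] with s hs
          exact (hpos s hs).deriv.symm
      · exact (hpos s hs0).hasDerivWithinAt
    rw [Nat.cast_succ, contDiffOn_succ_iff_derivWithin (uniqueDiffOn_Ici 0)]
    refine ⟨fun s hs => (hder s hs).differentiableWithinAt, by simp, ?_⟩
    exact (ih (wh1 H) hk hke).congr
      (fun s hs => (hder s hs).derivWithin ((uniqueDiffOn_Ici 0) s hs))

lemma glob_whitney_top (H : ℝ → ℝ) (hH : ContDiff ℝ (⊤ : ℕ∞) H) (he : ∀ x, H (-x) = H x) :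
    ContDiffOn ℝ (⊤ : ℕ∞) (fun s => H (Real.sqrt s)) (Ici 0) :=
  contDiffOn_infty.mpr fun n => glob_whitney n H hH he

lemma whitney_oneD (R : ℝ) (hR : 0 < R) (h : ℝ → ℝ)
    (hh : ContDiffOn ℝ (⊤ : ℕ∞) h (Set.Ioo (-R) R))
    (he : ∀ x ∈ Set.Ioo (-R) R, h (-x) = h x) :
    ContDiffOn ℝ (⊤ : ℕ∞) (fun s => h (Real.sqrt s)) (Set.Ico 0 (R^2)) := by
  have hop : IsOpen (Set.Ioo (-R) R) := isOpen_Ioo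
  intro s hs
  rcases eq_or_lt_of_le hs.1 with h0 | hpos
  · subst h0
    let χ : ContDiffBump (0:ℝ) := ⟨R/2, 3*R/4, by positivity, by linarith⟩
    set H : ℝ → ℝ := fun x => if x ∈ Set.Ioo (-R) R then χ x * h x else 0 with hHdef
    have hHc : ContDiff ℝ (⊤ : ℕ∞) H := by
      rw [contDiff_iff_contDiffAt]
      intro x
      by_cases hx : x ∈ Set.Ioo (-R) R
      · have heq : H =ᶠ[𝓝 x] fun y => χ y * h y := by
          filter_upwards [isOpen_Ioo.mem_nhds hx] with y hy
          simp only [hHdef, if_pos hy]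
        exact (χ.contDiff.contDiffAt.mul (hh.contDiffAt (isOpen_Ioo.mem_nhds hx))).congr_of_eventuallyEq heq
      · have hxa : 3*R/4 < |x| := by
          simp only [Set.mem_Ioo, not_and_or, not_lt] at hx
          rcases hx with hx | hx
          · linarith [neg_abs_le x]
          · linarith [le_abs_self x]
        have heq : H =ᶠ[𝓝 x] fun _ => (0:ℝ) := by
          filter_upwards [(isOpen_lt continuous_const continuous_abs).mem_nhds hxa] with y hy
          have hχ : χ y = 0 := χ.zero_of_le_dist (by rw [Real.dist_eq, sub_zero]; exact le_of_lt hy)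
          simp only [hHdef, hχ, zero_mul, ite_self]
        exact contDiffAt_const.congr_of_eventuallyEq heq
    have hHe : ∀ x, H (-x) = H x := by
      intro x
      by_cases hx : x ∈ Set.Ioo (-R) R
      · have hx' : -x ∈ Set.Ioo (-R) R := ⟨by linarith [hx.2], by linarith [hx.1]⟩
        simp only [hHdef, if_pos hx, if_pos hx', χ.neg, he x hx]
      · have hx' : -x ∉ Set.Ioo (-R) R := fun h' => hx ⟨by linarith [h'.2], by linarith [h'.1]⟩
        simp only [hHdef, if_neg hx, if_neg hx']
    have hHh : ∀ y, |y| < R/2 → H y = h y := by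
      intro y hy
      have hy' : y ∈ Set.Ioo (-R) R := ⟨by linarith [neg_abs_le y], by linarith [le_abs_self y]⟩
      have hχ : χ y = 1 :=
        χ.one_of_mem_closedBall (by rw [Metric.mem_closedBall, Real.dist_eq, sub_zero]; exact hy.le)
      simp only [hHdef, if_pos hy', hχ, one_mul]
    have hG := (glob_whitney_top H hHc hHe 0 (Set.mem_Ici.mpr le_rfl)).mono (Set.Ico_subset_Ici_self : Set.Ico (0:ℝ) (R ^ 2) ⊆ Set.Ici 0)
    refine hG.congr_of_eventuallyEq ?_ ?_
    · filter_upwards [self_mem_nhdsWithin,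
        mem_nhdsWithin_of_mem_nhds (Iio_mem_nhds (show (0:ℝ) < (R/2)^2 by positivity))] with t ht ht2
      show h (Real.sqrt t) = H (Real.sqrt t)
      rw [hHh]
      rw [abs_of_nonneg (Real.sqrt_nonneg t)]
      calc Real.sqrt t < Real.sqrt ((R/2)^2) := Real.sqrt_lt_sqrt ht.1 ht2
        _ = R/2 := Real.sqrt_sq (by positivity)
    · show h (Real.sqrt 0) = H (Real.sqrt 0)
      rw [hHh]
      rw [Real.sqrt_zero, abs_zero]; positivity
  · -- s > 0
    have hsq : Real.sqrt s ∈ Set.Ioo (-R) R := by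
      constructor
      · linarith [Real.sqrt_nonneg s]
      · calc Real.sqrt s < Real.sqrt (R^2) := Real.sqrt_lt_sqrt hs.1 hs.2
          _ = R := Real.sqrt_sq hR.le
    exact ((hh.contDiffAt (isOpen_Ioo.mem_nhds hsq)).comp s
      (Real.contDiffAt_sqrt hpos.ne')).contDiffWithinAt

open scoped ENNReal
/-- The open disk of radius `r₀ ∈ (0, ∞]` centered at the origin of `ℝ²`,
described by `x² + y² < r₀²`. -/
def disk (r₀ : ℝ≥0∞) : Set (ℝ × ℝ) :=
  {p | ENNReal.ofReal (p.1 ^ 2 + p.2 ^ 2) < r₀ ^ 2}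

/-- Rotation of the plane by angle `θ`. -/
noncomputable def rot (θ : ℝ) (p : ℝ × ℝ) : ℝ × ℝ :=
  (Real.cos θ * p.1 - Real.sin θ * p.2, Real.sin θ * p.1 + Real.cos θ * p.2)

/-- Coordinate expression of the Lie derivative of the bivector field `f ∂x ∧ ∂y`
on `ℝ²` along the vector field `X`: its coefficient is `X(f) - f · div X`. -/
noncomputable def lie2 (X : ℝ × ℝ → ℝ × ℝ) (f : ℝ × ℝ → ℝ) (p : ℝ × ℝ) : ℝ :=
  fderiv ℝ f p (X p) -
    f p * (fderiv ℝ (fun q => (X q).1) p (1, 0) + fderiv ℝ (fun q => (X q).2) p (0, 1))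

lemma disk_repr (r₀ : ℝ≥0∞) (f : ℝ × ℝ → ℝ)
    (hinv : ∀ θ : ℝ, ∀ p ∈ disk r₀, f (rot θ p) = f p) :
    ∀ p ∈ disk r₀, f p = f (Real.sqrt (p.1 ^ 2 + p.2 ^ 2), 0) := by
  rintro ⟨x, y⟩ hp
  simp only []
  by_cases h0 : x = 0 ∧ y = 0
  · obtain ⟨rfl, rfl⟩ := h0
    norm_num
  · set ρ := Real.sqrt (x ^ 2 + y ^ 2) with hρdef
    have hs0 : (0:ℝ) ≤ x ^ 2 + y ^ 2 := by positivity
    have hρsq : ρ ^ 2 = x ^ 2 + y ^ 2 := Real.sq_sqrt hs0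
    have hmem : ((ρ, 0) : ℝ × ℝ) ∈ disk r₀ := by
      simp only [disk, Set.mem_setOf_eq] at hp ⊢
      have : ρ ^ 2 + (0:ℝ) ^ 2 = x ^ 2 + y ^ 2 := by rw [hρsq]; ring
      rw [this]
      exact hp
    set z : ℂ := ⟨x, y⟩ with hzdef
    have hz : z ≠ 0 := by
      intro hz0
      rw [Complex.ext_iff] at hz0
      exact h0 ⟨hz0.1, hz0.2⟩
    have habs : ‖z‖ = ρ := by
      rw [Complex.norm_def, Complex.normSq_apply, hρdef]
      norm_num [sq]
      rfl
    have hρ0 : ρ ≠ 0 := by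
      rw [← habs]
      exact norm_ne_zero_iff.mpr hz
    have hrot : rot (Complex.arg z) (ρ, 0) = ((x, y) : ℝ × ℝ) := by
      simp only [rot]
      rw [Complex.cos_arg hz, Complex.sin_arg, habs]
      have hre : z.re = x := rfl
      have him : z.im = y := rfl
      rw [hre, him]
      field_simp
      simp only [mul_zero, sub_zero, add_zero, Prod.mk.injEq]
      constructor <;> field_simp
    calc f (x, y) = f (rot (Complex.arg z) (ρ, 0)) := by rw [hrot]
      _ = f (ρ, 0) := hinv _ _ hmem

/-- Whitney: a smooth rotationally invariant function `f` on a disk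
`D ⊂ ℝ²` of radius `r₀ ∈ (0, ∞]` can be written as `f (x, y) = g (x² + y²)` for a
smooth function `g` on `[0, r₀²)`. -/
theorem rotationally_invariant_factors_through_radius_sq
    (r₀ : ℝ≥0∞) (hr₀ : 0 < r₀) (f : ℝ × ℝ → ℝ)
    (hf : ContDiffOn ℝ (⊤ : ℕ∞) f (disk r₀))
    (hinv : ∀ θ : ℝ, ∀ p ∈ disk r₀, f (rot θ p) = f p) :
    ∃ g : ℝ → ℝ, ContDiffOn ℝ (⊤ : ℕ∞) g {s : ℝ | 0 ≤ s ∧ ENNReal.ofReal s < r₀ ^ 2} ∧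
      ∀ p ∈ disk r₀, f p = g (p.1 ^ 2 + p.2 ^ 2) := by
  have hrepr := disk_repr r₀ f hinv
  have hrotpi : ∀ x : ℝ, rot Real.pi ((x, 0) : ℝ × ℝ) = ((-x, 0) : ℝ × ℝ) := by
    intro x
    simp [rot, Real.cos_pi, Real.sin_pi]
  refine ⟨fun s => f (Real.sqrt s, 0), ?_, fun p hp => hrepr p hp⟩
  rcases eq_or_ne r₀ ⊤ with rfl | hfin
  · -- infinite radius
    have htop : (⊤:ℝ≥0∞) ^ 2 = ⊤ := by
      rw [pow_two, ENNReal.top_mul_top]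
    have hdisk : disk ⊤ = Set.univ := by
      ext p
      simp [disk, htop, ENNReal.ofReal_lt_top]
    have hSet : {s : ℝ | 0 ≤ s ∧ ENNReal.ofReal s < (⊤:ℝ≥0∞) ^ 2} = Set.Ici 0 := by
      ext s
      simp [htop, ENNReal.ofReal_lt_top, Set.mem_Ici]
    rw [hSet]
    intro s hs
    have hs' : (0:ℝ) ≤ s := hs
    set R : ℝ := Real.sqrt s + 1 with hRdef
    have hR : 0 < R := by positivity
    have hsR : s < R ^ 2 := by
      have h1 : Real.sqrt s ^ 2 = s := Real.sq_sqrt hs'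
      nlinarith [Real.sqrt_nonneg s]
    have hone : ContDiffOn ℝ (⊤ : ℕ∞) (fun s => f (Real.sqrt s, 0)) (Set.Ico 0 (R ^ 2)) := by
      apply whitney_oneD R hR (fun x => f (x, 0))
      · apply hf.comp ((contDiff_id.prodMk contDiff_const).contDiffOn)
        intro x _
        rw [hdisk]
        trivial
      · intro x _
        have hx0 : ((x, 0) : ℝ × ℝ) ∈ disk ⊤ := by rw [hdisk]; trivial
        calc f ((-x, 0) : ℝ × ℝ) = f (rot Real.pi ((x, 0) : ℝ × ℝ)) := by rw [hrotpi]
          _ = f ((x, 0) : ℝ × ℝ) := hinv _ _ hx0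
    have hmem : Set.Ico 0 (R ^ 2) ∈ nhdsWithin s (Set.Ici 0) := by
      rw [← Set.Ici_inter_Iio]
      exact Filter.inter_mem self_mem_nhdsWithin
        (mem_nhdsWithin_of_mem_nhds (Iio_mem_nhds hsR))
    exact (hone s ⟨hs', hsR⟩).mono_of_mem_nhdsWithin hmem
  · -- finite radius
    lift r₀ to ℝ≥0 using hfin
    set R : ℝ := (r₀ : ℝ) with hRdef
    have hR : 0 < R := by
      have : (0:ℝ≥0) < r₀ := by exact_mod_cast hr₀
      exact_mod_cast this
    have hco : ((r₀ : ℝ≥0∞)) ^ 2 = ENNReal.ofReal (R ^ 2) := by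
      rw [ENNReal.ofReal_pow hR.le, ENNReal.ofReal_coe_nnreal]
    have hofReal : ∀ a : ℝ, (ENNReal.ofReal a < ((r₀ : ℝ≥0∞)) ^ 2 ↔ a < R ^ 2) := by
      intro a
      rw [hco]
      exact ENNReal.ofReal_lt_ofReal_iff (by positivity)
    have hSet : {s : ℝ | 0 ≤ s ∧ ENNReal.ofReal s < ((r₀ : ℝ≥0∞)) ^ 2} = Set.Ico 0 (R ^ 2) := by
      ext s
      simp [Set.mem_Ico, hofReal]
    have hdisk : ∀ p : ℝ × ℝ, p ∈ disk (r₀ : ℝ≥0∞) ↔ p.1 ^ 2 + p.2 ^ 2 < R ^ 2 := by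
      intro p
      simp only [disk, Set.mem_setOf_eq]
      exact hofReal _
    rw [hSet]
    apply whitney_oneD R hR (fun x => f (x, 0))
    · apply hf.comp ((contDiff_id.prodMk contDiff_const).contDiffOn)
      intro x hx
      rw [hdisk]
      simp only [id_eq]
      have := sq_lt_sq' hx.1 hx.2
      nlinarith
    · intro x hx
      have hx0 : ((x, 0) : ℝ × ℝ) ∈ disk (r₀ : ℝ≥0∞) := by
        rw [hdisk]
        simp only []
        have := sq_lt_sq' hx.1 hx.2
        nlinarith
      calc f ((-x, 0) : ℝ × ℝ) = f (rot Real.pi ((x, 0) : ℝ × ℝ)) := by rw [hrotpi]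
        _ = f ((x, 0) : ℝ × ℝ) := hinv _ _ hx0
end

section
/- A rotationally invariant Poisson structure π = f ∂_x ∧ ∂_y on a disk D ⊂ ℝ², where f vanishes at the origin to order exactly 2, is not exact: there is no smooth vector field X on D with L_X π = -π. -/
open scoped ENNReal
/-- Auxiliary: the divergence-like coefficient appearing in `lie2`. -/
noncomputable def divX (X : ℝ × ℝ → ℝ × ℝ) (p : ℝ × ℝ) : ℝ :=
  fderiv ℝ (fun q => (X q).1) p (1, 0) + fderiv ℝ (fun q => (X q).2) p (0, 1)

lemma lie2_eq (X : ℝ × ℝ → ℝ × ℝ) (f : ℝ × ℝ → ℝ) (p : ℝ × ℝ) :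
    lie2 X f p = fderiv ℝ f p (X p) - f p * divX X p := rfl

lemma isOpen_disk (r₀ : ℝ≥0∞) : IsOpen (disk r₀) := by
  have : disk r₀ = (fun p : ℝ × ℝ => ENNReal.ofReal (p.1 ^ 2 + p.2 ^ 2)) ⁻¹' Set.Iio (r₀ ^ 2) := rfl
  rw [this]
  exact (ENNReal.continuous_ofReal.comp (by fun_prop)).isOpen_preimage _ isOpen_Iio

lemma hasFDerivAt_sq (p : ℝ × ℝ) : HasFDerivAt (fun p : ℝ × ℝ => p.1 ^ 2 + p.2 ^ 2)
    ((p.1 • ContinuousLinearMap.fst ℝ ℝ ℝ + p.1 • ContinuousLinearMap.fst ℝ ℝ ℝ) +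
     (p.2 • ContinuousLinearMap.snd ℝ ℝ ℝ + p.2 • ContinuousLinearMap.snd ℝ ℝ ℝ)) p := by
  have e : (fun p : ℝ × ℝ => p.1 ^ 2 + p.2 ^ 2) = fun p : ℝ × ℝ => p.1 * p.1 + p.2 * p.2 := by
    funext p; ring
  rw [e]
  exact ((hasFDerivAt_fst.mul hasFDerivAt_fst)).add ((hasFDerivAt_snd.mul hasFDerivAt_snd))

/-- a rotationally invariant Poisson structure `π = f ∂x ∧ ∂y` on a disk
`D ⊂ ℝ²`, where `f` vanishes at the origin to order exactly 2 (i.e.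
`f (x, y) = (x² + y²) h (x² + y²)` with `h` smooth and `h 0 ≠ 0`), is not exact:
there is no smooth vector field `X` on `D` with `L_X π = -π`. -/
theorem rot_invariant_order_two_not_exact
    (r₀ : ℝ≥0∞) (hr₀ : 0 < r₀) (h : ℝ → ℝ)
    (hh : ContDiffOn ℝ (⊤ : ℕ∞) h {s : ℝ | 0 ≤ s ∧ ENNReal.ofReal s < r₀ ^ 2})
    (hh0 : h 0 ≠ 0)
    (f : ℝ × ℝ → ℝ) (hf : ContDiffOn ℝ (⊤ : ℕ∞) f (disk r₀))
    (hform : ∀ p ∈ disk r₀, f p = (p.1 ^ 2 + p.2 ^ 2) * h (p.1 ^ 2 + p.2 ^ 2)) :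
    ¬ ∃ X : ℝ × ℝ → ℝ × ℝ, ContDiffOn ℝ (⊤ : ℕ∞) X (disk r₀) ∧
        ∀ p ∈ disk r₀, lie2 X f p = - f p := by
  rintro ⟨X, hX, heq⟩
  have hS : IsOpen (disk r₀) := isOpen_disk r₀
  have hr2 : (0 : ℝ≥0∞) < r₀ ^ 2 := ENNReal.pow_pos hr₀ 2
  have h0S : ((0:ℝ), (0:ℝ)) ∈ disk r₀ := by
    simp only [disk, Set.mem_setOf_eq]
    norm_num
    exact hr2
  set Ω : Set ℝ := {s : ℝ | 0 ≤ s ∧ ENNReal.ofReal s < r₀ ^ 2} with hΩdef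
  have hΩ0 : (0:ℝ) ∈ Ω := ⟨le_refl 0, by simpa using hr2⟩
  have hmemΩx : ∀ t : ℝ, (t, (0:ℝ)) ∈ disk r₀ → t ^ 2 ∈ Ω := by
    intro t ht
    refine ⟨sq_nonneg t, ?_⟩
    simpa [disk] using ht
  have hmemΩy : ∀ t : ℝ, ((0:ℝ), t) ∈ disk r₀ → t ^ 2 ∈ Ω := by
    intro t ht
    refine ⟨sq_nonneg t, ?_⟩
    simpa [disk] using ht
  -- the interior part of Ω
  set U : Set ℝ := Set.Ioi 0 ∩ (ENNReal.ofReal ⁻¹' Set.Iio (r₀ ^ 2)) with hUdef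
  have hUopen : IsOpen U :=
    isOpen_Ioi.inter (ENNReal.continuous_ofReal.isOpen_preimage _ isOpen_Iio)
  have hUsub : U ⊆ Ω := fun s hs => ⟨le_of_lt hs.1, hs.2⟩
  have hUnhd : ∀ s ∈ U, Ω ∈ nhds s := fun s hs =>
    Filter.mem_of_superset (hUopen.mem_nhds hs) hUsub
  have hUmem : ∀ t : ℝ, t ≠ 0 → t ^ 2 ∈ Ω → t ^ 2 ∈ U := fun t ht hΩ =>
    ⟨pow_two_pos_of_ne_zero ht, hΩ.2⟩
  -- interior of Ω is nonempty
  obtain ⟨ε, hε, hball⟩ := Metric.isOpen_iff.1 hS ((0:ℝ),(0:ℝ)) h0S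
  have hεS : ∀ t : ℝ, |t| < ε → (t,(0:ℝ)) ∈ disk r₀ := by
    intro t ht
    apply hball
    have : dist (t,(0:ℝ)) ((0:ℝ),(0:ℝ)) = |t| := by
      rw [Prod.dist_eq]
      simp [Real.dist_eq]
    rw [Metric.mem_ball, this]
    exact ht
  have hIntNe : (interior Ω).Nonempty := by
    refine ⟨(ε/2)^2, interior_maximal hUsub hUopen ?_⟩
    refine hUmem _ ((div_pos hε two_pos).ne') (hmemΩx _ (hεS (ε/2) ?_))
    rw [abs_of_pos (by positivity)]; linarith
  have hΩconv : Convex ℝ Ω := by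
    rw [convex_iff_ordConnected]
    constructor
    intro x hx y hy z hz
    exact ⟨le_trans hx.1 hz.1, lt_of_le_of_lt (ENNReal.ofReal_le_ofReal hz.2) hy.2⟩
  have hΩu : UniqueDiffOn ℝ Ω := uniqueDiffOn_convex hΩconv hIntNe
  -- the radial profile G and its derivative k
  set G : ℝ → ℝ := fun s => s * h s with hGdef
  have hGc : ContDiffOn ℝ (⊤ : ℕ∞) G Ω := contDiffOn_id.mul hh
  set k : ℝ → ℝ := derivWithin G Ω with hkdef
  have hkcont : ContinuousOn k Ω := hGc.continuousOn_derivWithin hΩu (by simp)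
  have hk0 : k 0 = h 0 := by
    have hdh : HasDerivWithinAt h (derivWithin h Ω 0) Ω 0 :=
      ((hh.differentiableOn (by simp)) 0 hΩ0).hasDerivWithinAt
    have hG0 : HasDerivWithinAt G (1 * h 0 + 0 * derivWithin h Ω 0) Ω 0 :=
      (hasDerivWithinAt_id 0 Ω).mul hdh
    simpa using hG0.derivWithin (hΩu 0 hΩ0)
  have hGd : ∀ s ∈ U, HasDerivAt G (k s) s := by
    intro s hs
    have h1 : ContDiffAt ℝ (⊤ : ℕ∞) G s := hGc.contDiffAt (hUnhd s hs)
    have h2 : HasDerivAt G (deriv G s) s := (h1.differentiableAt (by simp)).hasDerivAt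
    rwa [show k s = deriv G s from derivWithin_of_mem_nhds (hUnhd s hs)]
  -- regularity of the components of X
  have hX1c : ContDiffOn ℝ (⊤ : ℕ∞) (fun q : ℝ × ℝ => (X q).1) (disk r₀) :=
    contDiff_fst.comp_contDiffOn hX
  have hX2c : ContDiffOn ℝ (⊤ : ℕ∞) (fun q : ℝ × ℝ => (X q).2) (disk r₀) :=
    contDiff_snd.comp_contDiffOn hX
  -- the main pointwise identities on the two axes
  have E1 : ∀ t : ℝ, t ≠ 0 → (t, (0:ℝ)) ∈ disk r₀ →
      2 * k (t^2) * (X (t, (0:ℝ))).1 = t * h (t^2) * (divX X (t, (0:ℝ)) - 1) := by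
    intro t ht hp
    have hU : t ^ 2 ∈ U := hUmem t ht (hmemΩx t hp)
    have hQ := hasFDerivAt_sq (t, (0:ℝ))
    have hcomp := (hGd _ hU).comp_hasFDerivAt_of_eq (t, (0:ℝ)) hQ (by norm_num)
    have hfeq : f =ᶠ[nhds (t, (0:ℝ))]
        (G ∘ fun p : ℝ × ℝ => p.1 ^ 2 + p.2 ^ 2) := by
      filter_upwards [hS.mem_nhds hp] with q hq
      simpa [hGdef, Function.comp] using hform q hq
    have hfd : HasFDerivAt f _ (t, (0:ℝ)) := hcomp.congr_of_eventuallyEq hfeq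
    have hfval : f (t, (0:ℝ)) = t ^ 2 * h (t ^ 2) := by
      simpa using hform (t, (0:ℝ)) hp
    have happ : fderiv ℝ f (t, (0:ℝ)) (X (t, (0:ℝ)))
        = k (t ^ 2) * (2 * t * (X (t, (0:ℝ))).1) := by
      rw [hfd.fderiv]
      simp
      ring
    have hp' := heq (t, (0:ℝ)) hp
    rw [lie2_eq, happ, hfval] at hp'
    have key : t * (2 * k (t^2) * (X (t, (0:ℝ))).1)
        = t * (t * h (t^2) * (divX X (t, (0:ℝ)) - 1)) := by
      linear_combination hp'
    exact mul_left_cancel₀ ht key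
  have E2 : ∀ t : ℝ, t ≠ 0 → ((0:ℝ), t) ∈ disk r₀ →
      2 * k (t^2) * (X ((0:ℝ), t)).2 = t * h (t^2) * (divX X ((0:ℝ), t) - 1) := by
    intro t ht hp
    have hU : t ^ 2 ∈ U := hUmem t ht (hmemΩy t hp)
    have hQ := hasFDerivAt_sq ((0:ℝ), t)
    have hcomp := (hGd _ hU).comp_hasFDerivAt_of_eq ((0:ℝ), t) hQ (by norm_num)
    have hfeq : f =ᶠ[nhds ((0:ℝ), t)]
        (G ∘ fun p : ℝ × ℝ => p.1 ^ 2 + p.2 ^ 2) := by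
      filter_upwards [hS.mem_nhds hp] with q hq
      simpa [hGdef, Function.comp] using hform q hq
    have hfd : HasFDerivAt f _ ((0:ℝ), t) := hcomp.congr_of_eventuallyEq hfeq
    have hfval : f ((0:ℝ), t) = t ^ 2 * h (t ^ 2) := by
      simpa using hform ((0:ℝ), t) hp
    have happ : fderiv ℝ f ((0:ℝ), t) (X ((0:ℝ), t))
        = k (t ^ 2) * (2 * t * (X ((0:ℝ), t)).2) := by
      rw [hfd.fderiv]
      simp
      ring
    have hp' := heq ((0:ℝ), t) hp
    rw [lie2_eq, happ, hfval] at hp'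
    have key : t * (2 * k (t^2) * (X ((0:ℝ), t)).2)
        = t * (t * h (t^2) * (divX X ((0:ℝ), t) - 1)) := by
      linear_combination hp'
    exact mul_left_cancel₀ ht key
  -- limits along the two axes
  have hlinex : Filter.Tendsto (fun t : ℝ => (t, (0:ℝ))) (nhdsWithin 0 {(0:ℝ)}ᶜ)
      (nhds ((0:ℝ), (0:ℝ))) := by
    have hc : Continuous (fun t : ℝ => (t, (0:ℝ))) := by fun_prop
    simpa using (hc.tendsto 0).mono_left nhdsWithin_le_nhds
  have hliney : Filter.Tendsto (fun t : ℝ => ((0:ℝ), t)) (nhdsWithin 0 {(0:ℝ)}ᶜ)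
      (nhds ((0:ℝ), (0:ℝ))) := by
    have hc : Continuous (fun t : ℝ => ((0:ℝ), t)) := by fun_prop
    simpa using (hc.tendsto 0).mono_left nhdsWithin_le_nhds
  have hevSx : ∀ᶠ t in nhdsWithin 0 {(0:ℝ)}ᶜ, (t,(0:ℝ)) ∈ disk r₀ :=
    hlinex.eventually_mem (hS.mem_nhds h0S)
  have hevSy : ∀ᶠ t in nhdsWithin 0 {(0:ℝ)}ᶜ, ((0:ℝ),t) ∈ disk r₀ :=
    hliney.eventually_mem (hS.mem_nhds h0S)
  have hevne : ∀ᶠ t in nhdsWithin 0 {(0:ℝ)}ᶜ, t ≠ (0:ℝ) := by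
    have := eventually_mem_nhdsWithin (s := {(0:ℝ)}ᶜ) (a := (0:ℝ))
    filter_upwards [this] with t ht
    simpa using ht
  have hsq : Filter.Tendsto (fun t : ℝ => t ^ 2) (nhdsWithin 0 {(0:ℝ)}ᶜ)
      (nhdsWithin 0 Ω) := by
    rw [tendsto_nhdsWithin_iff]
    constructor
    · have h2 : Filter.Tendsto (fun t : ℝ => t ^ 2) (nhds 0) (nhds 0) := by
        simpa using (continuous_pow 2).tendsto (0:ℝ)
      exact h2.mono_left nhdsWithin_le_nhds
    · filter_upwards [hevSx] with t ht using hmemΩx t ht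
  have hk_lim : Filter.Tendsto (fun t : ℝ => k (t ^ 2)) (nhdsWithin 0 {(0:ℝ)}ᶜ)
      (nhds (h 0)) := by
    have h1 := (hkcont 0 hΩ0).tendsto
    rw [hk0] at h1
    exact h1.comp hsq
  have hh_lim : Filter.Tendsto (fun t : ℝ => h (t ^ 2)) (nhdsWithin 0 {(0:ℝ)}ᶜ)
      (nhds (h 0)) := ((hh.continuousOn 0 hΩ0).tendsto).comp hsq
  have hXcont : ContinuousAt X ((0:ℝ),(0:ℝ)) := (hX.contDiffAt (hS.mem_nhds h0S)).continuousAt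
  have hX1_lim : Filter.Tendsto (fun t : ℝ => (X (t, (0:ℝ))).1) (nhdsWithin 0 {(0:ℝ)}ᶜ)
      (nhds ((X ((0:ℝ),(0:ℝ))).1)) := (hXcont.fst.tendsto).comp hlinex
  have hX2_lim : Filter.Tendsto (fun t : ℝ => (X ((0:ℝ), t)).2) (nhdsWithin 0 {(0:ℝ)}ᶜ)
      (nhds ((X ((0:ℝ),(0:ℝ))).2)) := (hXcont.snd.tendsto).comp hliney
  -- continuity of divX at the origin
  have hDcont : ContinuousAt (divX X) ((0:ℝ),(0:ℝ)) := by
    have c1 : ContinuousOn (fun p => fderiv ℝ (fun q : ℝ × ℝ => (X q).1) p) (disk r₀) :=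
      hX1c.continuousOn_fderiv_of_isOpen hS (by simp)
    have c2 : ContinuousOn (fun p => fderiv ℝ (fun q : ℝ × ℝ => (X q).2) p) (disk r₀) :=
      hX2c.continuousOn_fderiv_of_isOpen hS (by simp)
    have d1 : ContinuousAt (fun p => fderiv ℝ (fun q : ℝ × ℝ => (X q).1) p) ((0:ℝ),(0:ℝ)) :=
      c1.continuousAt (hS.mem_nhds h0S)
    have d2 : ContinuousAt (fun p => fderiv ℝ (fun q : ℝ × ℝ => (X q).2) p) ((0:ℝ),(0:ℝ)) :=
      c2.continuousAt (hS.mem_nhds h0S)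
    have e1 : ContinuousAt (fun p => fderiv ℝ (fun q : ℝ × ℝ => (X q).1) p (1, 0)) ((0:ℝ),(0:ℝ)) :=
      ((ContinuousLinearMap.apply ℝ ℝ (((1:ℝ),(0:ℝ)) : ℝ × ℝ)).continuous.continuousAt).comp d1
    have e2 : ContinuousAt (fun p => fderiv ℝ (fun q : ℝ × ℝ => (X q).2) p (0, 1)) ((0:ℝ),(0:ℝ)) :=
      ((ContinuousLinearMap.apply ℝ ℝ (((0:ℝ),(1:ℝ)) : ℝ × ℝ)).continuous.continuousAt).comp d2
    exact e1.add e2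
  have hDx_lim : Filter.Tendsto (fun t : ℝ => divX X (t, (0:ℝ))) (nhdsWithin 0 {(0:ℝ)}ᶜ)
      (nhds (divX X ((0:ℝ),(0:ℝ)))) := (hDcont.tendsto).comp hlinex
  have hDy_lim : Filter.Tendsto (fun t : ℝ => divX X ((0:ℝ), t)) (nhdsWithin 0 {(0:ℝ)}ᶜ)
      (nhds (divX X ((0:ℝ),(0:ℝ)))) := (hDcont.tendsto).comp hliney
  have hid_lim : Filter.Tendsto (fun t : ℝ => t) (nhdsWithin 0 {(0:ℝ)}ᶜ) (nhds (0:ℝ)) :=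
    Filter.tendsto_id.mono_left nhdsWithin_le_nhds
  -- Step 1: X vanishes at the origin
  have X10 : (X ((0:ℝ),(0:ℝ))).1 = 0 := by
    have lim1 : Filter.Tendsto (fun t : ℝ => 2 * k (t^2) * (X (t, (0:ℝ))).1)
        (nhdsWithin 0 {(0:ℝ)}ᶜ) (nhds (2 * h 0 * (X ((0:ℝ),(0:ℝ))).1)) :=
      (tendsto_const_nhds.mul hk_lim).mul hX1_lim
    have lim2 : Filter.Tendsto (fun t : ℝ => t * h (t^2) * (divX X (t, (0:ℝ)) - 1))
        (nhdsWithin 0 {(0:ℝ)}ᶜ) (nhds (0 * h 0 * (divX X ((0:ℝ),(0:ℝ)) - 1))) :=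
      (hid_lim.mul hh_lim).mul (hDx_lim.sub tendsto_const_nhds)
    have heqx : ∀ᶠ t in nhdsWithin 0 {(0:ℝ)}ᶜ,
        2 * k (t^2) * (X (t, (0:ℝ))).1 = t * h (t^2) * (divX X (t, (0:ℝ)) - 1) := by
      filter_upwards [hevSx, hevne] with t h1 h2 using E1 t h2 h1
    have := tendsto_nhds_unique (Filter.Tendsto.congr' heqx lim1) lim2
    have h2 : 2 * h 0 * (X ((0:ℝ),(0:ℝ))).1 = 0 := by rw [this]; ring
    simpa [mul_eq_zero, hh0] using h2
  have X20 : (X ((0:ℝ),(0:ℝ))).2 = 0 := by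
    have lim1 : Filter.Tendsto (fun t : ℝ => 2 * k (t^2) * (X ((0:ℝ), t)).2)
        (nhdsWithin 0 {(0:ℝ)}ᶜ) (nhds (2 * h 0 * (X ((0:ℝ),(0:ℝ))).2)) :=
      (tendsto_const_nhds.mul hk_lim).mul hX2_lim
    have lim2 : Filter.Tendsto (fun t : ℝ => t * h (t^2) * (divX X ((0:ℝ), t) - 1))
        (nhdsWithin 0 {(0:ℝ)}ᶜ) (nhds (0 * h 0 * (divX X ((0:ℝ),(0:ℝ)) - 1))) :=
      (hid_lim.mul hh_lim).mul (hDy_lim.sub tendsto_const_nhds)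
    have heqy : ∀ᶠ t in nhdsWithin 0 {(0:ℝ)}ᶜ,
        2 * k (t^2) * (X ((0:ℝ), t)).2 = t * h (t^2) * (divX X ((0:ℝ), t) - 1) := by
      filter_upwards [hevSy, hevne] with t h1 h2 using E2 t h2 h1
    have := tendsto_nhds_unique (Filter.Tendsto.congr' heqy lim1) lim2
    have h2 : 2 * h 0 * (X ((0:ℝ),(0:ℝ))).2 = 0 := by rw [this]; ring
    simpa [mul_eq_zero, hh0] using h2
  -- Step 2: difference quotients
  set a : ℝ := fderiv ℝ (fun q : ℝ × ℝ => (X q).1) ((0:ℝ),(0:ℝ)) (1, 0) with hadef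
  set d : ℝ := fderiv ℝ (fun q : ℝ × ℝ => (X q).2) ((0:ℝ),(0:ℝ)) (0, 1) with hddef
  have hdiff1 : DifferentiableAt ℝ (fun q : ℝ × ℝ => (X q).1) ((0:ℝ),(0:ℝ)) :=
    (hX1c.contDiffAt (hS.mem_nhds h0S)).differentiableAt (by simp)
  have hdiff2 : DifferentiableAt ℝ (fun q : ℝ × ℝ => (X q).2) ((0:ℝ),(0:ℝ)) :=
    (hX2c.contDiffAt (hS.mem_nhds h0S)).differentiableAt (by simp)
  have hlinex' : HasDerivAt (fun t : ℝ => (t, (0:ℝ))) ((1:ℝ),(0:ℝ)) 0 :=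
    HasDerivAt.prodMk (hasDerivAt_id (0:ℝ)) (hasDerivAt_const (0:ℝ) (0:ℝ))
  have hliney' : HasDerivAt (fun t : ℝ => ((0:ℝ), t)) ((0:ℝ),(1:ℝ)) 0 :=
    HasDerivAt.prodMk (hasDerivAt_const (0:ℝ) (0:ℝ)) (hasDerivAt_id (0:ℝ))
  have hda0 : HasDerivAt ((fun q : ℝ × ℝ => (X q).1) ∘ (fun t : ℝ => (t, (0:ℝ))))
      (fderiv ℝ (fun q : ℝ × ℝ => (X q).1) ((0:ℝ),(0:ℝ)) ((1:ℝ),(0:ℝ))) 0 :=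
    hdiff1.hasFDerivAt.comp_hasDerivAt_of_eq 0 hlinex' rfl
  have hda : HasDerivAt (fun t : ℝ => (X (t, (0:ℝ))).1) a 0 := hda0
  have hdd0 : HasDerivAt ((fun q : ℝ × ℝ => (X q).2) ∘ (fun t : ℝ => ((0:ℝ), t)))
      (fderiv ℝ (fun q : ℝ × ℝ => (X q).2) ((0:ℝ),(0:ℝ)) ((0:ℝ),(1:ℝ))) 0 :=
    hdiff2.hasFDerivAt.comp_hasDerivAt_of_eq 0 hliney' rfl
  have hdd : HasDerivAt (fun t : ℝ => (X ((0:ℝ), t)).2) d 0 := hdd0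
  have hslopex : Filter.Tendsto (fun t : ℝ => (X (t, (0:ℝ))).1 / t)
      (nhdsWithin 0 {(0:ℝ)}ᶜ) (nhds a) := by
    have h1 := hasDerivAt_iff_tendsto_slope.1 hda
    have X10' : (X (0:ℝ×ℝ)).1 = 0 := X10
    apply h1.congr
    intro t
    simp [slope, X10, X10', div_eq_inv_mul]
  have hslopey : Filter.Tendsto (fun t : ℝ => (X ((0:ℝ), t)).2 / t)
      (nhdsWithin 0 {(0:ℝ)}ᶜ) (nhds d) := by
    have h1 := hasDerivAt_iff_tendsto_slope.1 hdd
    have X20' : (X (0:ℝ×ℝ)).2 = 0 := X20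
    apply h1.congr
    intro t
    simp [slope, X20, X20', div_eq_inv_mul]
  -- Step 3: the quadratic identities
  have eqa : 2 * h 0 * a = h 0 * (divX X ((0:ℝ),(0:ℝ)) - 1) := by
    have lim3 : Filter.Tendsto (fun t : ℝ => 2 * k (t^2) * ((X (t, (0:ℝ))).1 / t))
        (nhdsWithin 0 {(0:ℝ)}ᶜ) (nhds (2 * h 0 * a)) :=
      (tendsto_const_nhds.mul hk_lim).mul hslopex
    have lim4 : Filter.Tendsto (fun t : ℝ => h (t^2) * (divX X (t, (0:ℝ)) - 1))
        (nhdsWithin 0 {(0:ℝ)}ᶜ) (nhds (h 0 * (divX X ((0:ℝ),(0:ℝ)) - 1))) :=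
      hh_lim.mul (hDx_lim.sub tendsto_const_nhds)
    have heqx2 : ∀ᶠ t in nhdsWithin 0 {(0:ℝ)}ᶜ,
        2 * k (t^2) * ((X (t, (0:ℝ))).1 / t) = h (t^2) * (divX X (t, (0:ℝ)) - 1) := by
      filter_upwards [hevSx, hevne] with t h1 h2
      have hE := E1 t h2 h1
      have e1 : 2 * k (t^2) * ((X (t, (0:ℝ))).1 / t) = (2 * k (t^2) * (X (t, (0:ℝ))).1) / t := by
        ring
      rw [e1, hE]
      field_simp
    exact tendsto_nhds_unique (Filter.Tendsto.congr' heqx2 lim3) lim4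
  have eqd : 2 * h 0 * d = h 0 * (divX X ((0:ℝ),(0:ℝ)) - 1) := by
    have lim3 : Filter.Tendsto (fun t : ℝ => 2 * k (t^2) * ((X ((0:ℝ), t)).2 / t))
        (nhdsWithin 0 {(0:ℝ)}ᶜ) (nhds (2 * h 0 * d)) :=
      (tendsto_const_nhds.mul hk_lim).mul hslopey
    have lim4 : Filter.Tendsto (fun t : ℝ => h (t^2) * (divX X ((0:ℝ), t) - 1))
        (nhdsWithin 0 {(0:ℝ)}ᶜ) (nhds (h 0 * (divX X ((0:ℝ),(0:ℝ)) - 1))) :=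
      hh_lim.mul (hDy_lim.sub tendsto_const_nhds)
    have heqy2 : ∀ᶠ t in nhdsWithin 0 {(0:ℝ)}ᶜ,
        2 * k (t^2) * ((X ((0:ℝ), t)).2 / t) = h (t^2) * (divX X ((0:ℝ), t) - 1) := by
      filter_upwards [hevSy, hevne] with t h1 h2
      have hE := E2 t h2 h1
      have e1 : 2 * k (t^2) * ((X ((0:ℝ), t)).2 / t) = (2 * k (t^2) * (X ((0:ℝ), t)).2) / t := by
        ring
      rw [e1, hE]
      field_simp
    exact tendsto_nhds_unique (Filter.Tendsto.congr' heqy2 lim3) lim4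
  -- conclusion
  have hDval : divX X ((0:ℝ),(0:ℝ)) = a + d := rfl
  rw [hDval] at eqa eqd
  apply hh0
  nlinarith [eqa, eqd]
end
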